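/- arXiv:1208.3750 — 2 statements merged into one kernel-verified Lean document; each statement's English description precedes it below -/
import Mathlib

section
/- Let V be a finite-dimensional complex vector space with a nondegenerate alternating bilinear form ω, and let h : V → V be a linear automorphism of finite order preserving ω (ω(h v, h w) = ω(v, w)). Then the restriction of ω to the fixed subspace V^h = {v : h v = v} is nondegenerate; in particular dim V^h is even. -/
/-!
Averaging over the cyclic group generated by `h` gives an operator `P` with image in the fixed
space `V^h` such that `ω v (P u) = ω v u` whenever `h v = v`, because `ω` is `h`-invariant. So a
fixed vector orthogonal to `V^h` is orthogonal to all of `V`, hence zero. Evenness then holds for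
any nondegenerate alternating form: its Gram matrix `A` satisfies `Aᵀ = -A` and `det A ≠ 0`,
while `det (-A) = (-1) ^ n det A`.
-/

open Module Finset

namespace Matrix

theorem det_eq_zero_of_transpose_eq_neg {R n : Type*} [CommRing R] [NoZeroDivisors R]
    [NeZero (2 : R)] [Fintype n] [DecidableEq n] {A : Matrix n n R} (hA : Aᵀ = -A)
    (hn : Odd (Fintype.card n)) : A.det = 0 := by
  have h : A.det = -A.det := by
    conv_lhs => rw [← det_transpose, hA, det_neg, hn.neg_one_pow, neg_one_mul]
  have h2 : (2 : R) * A.det = 0 := by rw [two_mul]; nth_rw 1 [h]; exact neg_add_cancel _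
  exact (mul_eq_zero.mp h2).resolve_left two_ne_zero

end Matrix

namespace LinearMap

open Matrix

variable {K M : Type*} [Field K] [AddCommGroup M] [Module K M]

theorem IsAlt.even_finrank [NeZero (2 : K)] [FiniteDimensional K M] {B : M →ₗ[K] M →ₗ[K] K}
    (hB : B.IsAlt) (hsep : B.SeparatingLeft) : Even (finrank K M) := by
  by_contra hodd
  let b := finBasis K M
  have hskew : (toMatrix₂ b b B)ᵀ = -toMatrix₂ b b B := by
    ext i j
    simp only [transpose_apply, Matrix.neg_apply, toMatrix₂_apply]
    exact (hB.neg _ _).symm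
  exact (separatingLeft_iff_det_ne_zero b).mp hsep
    (det_eq_zero_of_transpose_eq_neg hskew (by simpa using Nat.not_even_iff_odd.mp hodd))

end LinearMap

namespace Module.End

variable {K M : Type*} [Field K] [AddCommGroup M] [Module K M]

def cyclicAverage (f : End K M) (m : ℕ) : End K M :=
  (m : K)⁻¹ • ∑ i ∈ range m, f ^ i

variable {f : End K M} {m : ℕ}

theorem sub_one_mul_cyclicAverage (hf : f ^ m = 1) : (f - 1) * cyclicAverage f m = 0 := by
  rw [cyclicAverage, mul_smul_comm, mul_geom_sum, hf, sub_self, smul_zero]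

theorem cyclicAverage_apply_mem_ker (hf : f ^ m = 1) (u : M) :
    cyclicAverage f m u ∈ LinearMap.ker (f - 1) := by
  rw [LinearMap.mem_ker, ← mul_apply, sub_one_mul_cyclicAverage hf, LinearMap.zero_apply]

variable {N : Type*} [AddCommGroup N] [Module K N] {B : M →ₗ[K] M →ₗ[K] N}

theorem apply_pow_apply_pow (hB : ∀ x y, B (f x) (f y) = B x y) (i : ℕ) (x y : M) :
    B ((f ^ i) x) ((f ^ i) y) = B x y := by
  induction i with
  | zero => rfl
  | succ i ih => rw [pow_succ', mul_apply, mul_apply, hB, ih]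

theorem apply_cyclicAverage_of_apply_eq (hB : ∀ x y, B (f x) (f y) = B x y) (hm : (m : K) ≠ 0)
    {v : M} (hv : f v = v) (u : M) : B v (cyclicAverage f m u) = B v u := by
  have hpow (i : ℕ) : B v ((f ^ i) u) = B v u := by
    conv_lhs => rw [← (pow_apply f i v).trans (Function.iterate_fixed hv i)]
    exact apply_pow_apply_pow hB i v u
  simp only [cyclicAverage, LinearMap.smul_apply, LinearMap.sum_apply, map_smul, map_sum, hpow,
    sum_const, card_range, ← Nat.cast_smul_eq_nsmul K, smul_smul, inv_mul_cancel₀ hm, one_smul]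

theorem separatingLeft_domRestrict₁₂_ker_sub_one (hsep : B.SeparatingLeft) (hf : f ^ m = 1)
    (hm : (m : K) ≠ 0) (hB : ∀ x y, B (f x) (f y) = B x y) :
    (B.domRestrict₁₂ (LinearMap.ker (f - 1)) (LinearMap.ker (f - 1))).SeparatingLeft := by
  rintro ⟨v, hv⟩ hvK
  have hv' : f v = v := sub_eq_zero.mp hv
  refine Subtype.ext (hsep v fun u ↦ ?_)
  rw [← apply_cyclicAverage_of_apply_eq hB hm hv' u]
  exact hvK ⟨_, cyclicAverage_apply_mem_ker hf u⟩

end Module.End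

theorem stmt_4 (V : Type*) [AddCommGroup V] [Module ℂ V] [FiniteDimensional ℂ V]
    (ω : V →ₗ[ℂ] V →ₗ[ℂ] ℂ)
    (halt : ∀ v, ω v v = 0)
    (hnd : ∀ v, (∀ w, ω v w = 0) → v = 0)
    (h : V ≃ₗ[ℂ] V) (m : ℕ) (hm : 0 < m) (hord : h ^ m = 1)
    (hinv : ∀ v w, ω (h v) (h w) = ω v w) :
    (∀ v ∈ LinearMap.ker (h.toLinearMap - LinearMap.id),
      (∀ w ∈ LinearMap.ker (h.toLinearMap - LinearMap.id), ω v w = 0) → v = 0) ∧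
    Even (Module.finrank ℂ (LinearMap.ker (h.toLinearMap - LinearMap.id))) := by
  have hord' : h.toLinearMap ^ m = 1 := by
    have := congrArg LinearEquiv.automorphismGroup.toLinearMapMonoidHom hord
    rwa [map_pow, map_one] at this
  have hsep := End.separatingLeft_domRestrict₁₂_ker_sub_one hnd hord' (by exact_mod_cast hm.ne')
    hinv
  refine ⟨fun v hv hvK ↦ congrArg Subtype.val (hsep ⟨v, hv⟩ fun w ↦ hvK w w.2), ?_⟩
  exact LinearMap.IsAlt.even_finrank (fun v ↦ halt v) hsep
end

section
/- In the exterior algebra of ℂ^{2(n−1)} ⊕ conjugate part, with n ≥ 3: given 1-forms dz¹_i, dz²_i, dz̄²_i for 1 ≤ i ≤ n satisfying Σᵢ dz¹_i = 0, Σᵢ dz²_i = 0, Σᵢ dz̄²_i = 0, and with {dz¹_i, dz²_i, dz̄²_i : 1 ≤ i ≤ n−1} part of a basis of the dual space, the element τ̃ = Σ_{i=1}^{n} dz¹_i ∧ dz²_i ∧ dz̄²_i is nonzero. -/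
/-! Linear independence gives a linear map `L : W → ℂ³` sending `f p j`, for `j < n - 1`, to the
`p`-th unit vector if `j = idx p` and to `0` otherwise, where `idx = (0, 1, 1)`; the relations
`∑ i, f p i = 0` then send `f p (n - 1)` to minus the `p`-th unit vector. Pairing `τ̃` with the
alternating 3-form `det ∘ L`, the `i`-th summand becomes a diagonal determinant, which vanishes for
`i < n - 1` because `idx 0 ≠ idx 1` (this needs `n - 1 ≥ 2`) and is `(-1)³` for `i = n - 1`.
The pairing is the coefficient of `dz¹₁ ∧ dz²₂ ∧ dz̄²₂` in `τ̃`. -/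

open ExteriorAlgebra

theorem LinearIndependent.exists_linearMap_apply_eq {K V V' ι : Type*} [DivisionRing K]
    [AddCommGroup V] [Module K V] [AddCommGroup V'] [Module K V'] {v : ι → V}
    (hv : LinearIndependent K v) (w : ι → V') : ∃ L : V →ₗ[K] V', ∀ i, L (v i) = w i := by
  obtain ⟨L, hL⟩ := LinearMap.exists_extend ((Finsupp.linearCombination K w).comp hv.repr)
  refine ⟨L, fun i => ?_⟩
  let x : Submodule.span K (Set.range v) := ⟨v i, Submodule.subset_span (Set.mem_range_self i)⟩
  simpa [hv.repr_eq_single i x rfl] using LinearMap.congr_fun hL x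

theorem Fin.apply_last_eq_neg_sum_castSucc {M : Type*} [AddCommGroup M] {m : ℕ}
    (v : Fin (m + 1) → M) (hv : ∑ i, v i = 0) : v (Fin.last m) = -∑ j : Fin m, v j.castSucc := by
  rw [Fin.sum_univ_castSucc] at hv
  exact eq_neg_of_add_eq_zero_right hv

theorem Pi.basisFun_det_single {R k : Type*} [CommRing R] [Fintype k] [DecidableEq k]
    (x : k → R) : (Pi.basisFun R k).det (fun p => Pi.single p (x p)) = ∏ p, x p := by
  rw [Pi.basisFun_det_apply, ← Matrix.det_diagonal]
  congr 1
  ext p q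
  simp [Matrix.diagonal_apply, Pi.single_apply, eq_comm]

namespace ExteriorAlgebra

variable {R W N : Type*} [CommRing R] [AddCommGroup W] [Module R W] [AddCommGroup N] [Module R N]

theorem liftAlternating_single_ι_mul_ι_mul_ι (g : W [⋀^Fin 3]→ₗ[R] N) (a b c : W) :
    liftAlternating (Pi.single 3 g) (ι R a * ι R b * ι R c) = g ![a, b, c] := by
  have : ι R a * ι R b * ι R c = ιMulti R 3 ![a, b, c] := by
    simp [ιMulti_apply, mul_assoc]
  rw [this, liftAlternating_apply_ιMulti, Pi.single_eq_same]

theorem sum_ι_mul_ι_mul_ι_ne_zero {κ : Type*} [Fintype κ] (g : W [⋀^Fin 3]→ₗ[R] N)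
    (a b c : κ → W) (h : ∑ i, g ![a i, b i, c i] ≠ 0) :
    ∑ i, ι R (a i) * ι R (b i) * ι R (c i) ≠ 0 := by
  intro h0
  apply h
  simpa [map_sum, liftAlternating_single_ι_mul_ι_mul_ι] using
    congrArg (liftAlternating (Pi.single 3 g)) h0

end ExteriorAlgebra

theorem stmt_9 (n : ℕ) (hn : 3 ≤ n) (W : Type*) [AddCommGroup W] [Module ℂ W]
    (f : Fin 3 → Fin n → W)
    (hsum : ∀ q : Fin 3, ∑ i : Fin n, f q i = 0)
    (hind : LinearIndependent ℂ
      (fun qi : Fin 3 × Fin (n - 1) => f qi.1 (Fin.castLE (Nat.sub_le n 1) qi.2))) :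
    (∑ i : Fin n, ExteriorAlgebra.ι ℂ (f 0 i) * ExteriorAlgebra.ι ℂ (f 1 i) *
      ExteriorAlgebra.ι ℂ (f 2 i)) ≠ 0 := by
  obtain ⟨m, rfl⟩ : ∃ m, n = m + 3 := ⟨n - 3, by omega⟩
  let idx : Fin 3 → Fin (m + 2) := ![0, 1, 1]
  let e (p : Fin 3) (i : Fin (m + 3)) : ℂ :=
    if i = Fin.last _ then -1 else if i = (idx p).castSucc then 1 else 0
  have hind' : LinearIndependent ℂ fun qi : Fin 3 × Fin (m + 2) => f qi.1 qi.2.castSucc := hind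
  obtain ⟨L, hL⟩ := hind'.exists_linearMap_apply_eq
    fun qi => if qi.2 = idx qi.1 then (Pi.single qi.1 1 : Fin 3 → ℂ) else 0
  have hLf (p : Fin 3) (i : Fin (m + 3)) : L (f p i) = Pi.single p (e p i) := by
    induction i using Fin.lastCases with
    | last =>
      rw [Fin.apply_last_eq_neg_sum_castSucc _ (hsum p), map_neg, map_sum]
      simp [e, fun j => hL (p, j), Finset.sum_ite_eq', Pi.single_neg]
    | cast j =>
      rw [hL (p, j)]
      by_cases h : j = idx p <;> simp [e, h, (Fin.castSucc_lt_last j).ne]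
  let g := (Pi.basisFun ℂ (Fin 3)).det.compLinearMap L
  have hg (i : Fin (m + 3)) : g ![f 0 i, f 1 i, f 2 i] = ∏ p, e p i := by
    rw [AlternatingMap.compLinearMap_apply, ← Pi.basisFun_det_single]
    congr 1
    funext p
    fin_cases p <;> simp [hLf]
  have hprod_castSucc (j : Fin (m + 2)) : ∏ p, e p j.castSucc = 0 := by
    by_cases h : j = 0 <;> simp [Fin.prod_univ_three, e, idx, h, (Fin.castSucc_lt_last j).ne]
  refine sum_ι_mul_ι_mul_ι_ne_zero g _ _ _ ?_
  simp only [hg, Fin.sum_univ_castSucc, hprod_castSucc]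
  simp [e]
end
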